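/- arXiv:1807.06527 — 4 statements merged into one kernel-verified Lean document; each statement's English description precedes it below -/
import Mathlib

section
/- For every positive integer b and every integer n ≥ 2b, the quantity z_{b,n} is non-increasing in n, i.e. z_{b,n+1} ≤ z_{b,n} for all n ≥ 2b. -/
open Finset

/-- `p b n = P(Bin(n, b/n) < b)`. -/
noncomputable def binP (b n : ℕ) : ℝ :=
  ∑ i ∈ Finset.range b, (n.choose i : ℝ) * ((b : ℝ) / n) ^ i * (1 - (b : ℝ) / n) ^ (n - i)

/-- `z b n = (1/2 - p b n) / P(Bin(n, b/n) = b)`. -/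
noncomputable def binZ (b n : ℕ) : ℝ :=
  (1 / 2 - binP b n) / ((n.choose b : ℝ) * ((b : ℝ) / n) ^ b * (1 - (b : ℝ) / n) ^ (n - b))

/-!
Put `q_n = P(ξ_{b,n} = b)` and `W_n = P(ξ_{b,n} < b) + P(ξ_{b,n} ≤ b)`, so that
`z_{b,n} = 1/2 - (W_n - 1) / (2 q_n)`. It then suffices that `q_n` decreases and that `W_n ≥ 1`
increases in `n ≥ 2b`.

`q_{n+1} / q_n = (1 + 1/(n-b))^(n-b) / (1 + 1/n)^n ≤ 1`, by the monotonicity of `(1 + 1/m)^m`.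

`W_{2b} = 1` by the symmetry of `Bin(2b, 1/2)`. For the monotonicity of `W`, view the
probabilities as Bernstein polynomials in `θ`. Adding one more trial gives
`W_{n+1}(θ) = W_n(θ) - θ g(θ)` and `W_{n+1}'(θ) = -(n+1) g(θ)`, where
`g(θ) = P(Bin(n, θ) ∈ {b-1, b})`. Since `n ≥ 2b`, `g` decreases on `[b/(n+1), 1]`, so the mean value
theorem on `[b/(n+1), b/n]`, together with `(n+1)(b/n - b/(n+1)) = b/n`, gives
`W_n(b/n) ≤ W_{n+1}(b/(n+1))`.
-/

open Polynomial

theorem one_add_inv_pow_monotone : Monotone fun m : ℕ => (1 + (m : ℝ)⁻¹) ^ m := by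
  refine monotone_nat_of_le_succ fun m => ?_
  rcases m with _ | m
  · norm_num
  push_cast
  set u : ℝ := 1 + ((m : ℝ) + 1)⁻¹
  set a : ℝ := -((m : ℝ) + 2)⁻¹ ^ 2
  have ha : -2 ≤ a := by
    have : ((m : ℝ) + 2)⁻¹ ≤ 1 := inv_le_one_of_one_le₀ (by linarith [m.cast_nonneg (α := ℝ)])
    nlinarith [inv_nonneg.2 (by positivity : (0 : ℝ) ≤ m + 2)]
  have hv : 1 + ((m : ℝ) + 1 + 1)⁻¹ = u * (1 + a) := by
    simp only [u, a]
    field_simp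
    ring
  have hu : u * (1 + (m + 2 : ℕ) * a) = 1 := by
    simp only [u, a]
    push_cast
    field_simp
    ring
  calc u ^ (m + 1) = u ^ (m + 2) * (1 + (m + 2 : ℕ) * a) := by
        rw [pow_succ u (m + 1), mul_assoc, hu, mul_one]
    _ ≤ u ^ (m + 2) * (1 + a) ^ (m + 2) := by gcongr; exact one_add_mul_le_pow ha _
    _ = _ := by rw [hv, mul_pow]

namespace bernsteinPolynomial

section CommRing

variable (R : Type*) [CommRing R]

theorem succ_zero (n : ℕ) :
    bernsteinPolynomial R (n + 1) 0 = (1 - X) * bernsteinPolynomial R n 0 := by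
  simp [bernsteinPolynomial, pow_succ, mul_comm]

theorem succ_succ (n ν : ℕ) :
    bernsteinPolynomial R (n + 1) (ν + 1) =
      X * bernsteinPolynomial R n ν + (1 - X) * bernsteinPolynomial R n (ν + 1) := by
  rcases lt_or_ge ν n with h | h
  · obtain ⟨d, rfl⟩ := Nat.exists_eq_add_of_lt h
    simp only [bernsteinPolynomial, Nat.choose_succ_succ',
      show ν + d + 1 + 1 - (ν + 1) = d + 1 by omega, show ν + d + 1 - ν = d + 1 by omega,
      show ν + d + 1 - (ν + 1) = d by omega]
    push_cast
    ring
  · rcases h.eq_or_lt with rfl | h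
    · simp [bernsteinPolynomial, pow_succ, mul_comm]
    · simp [eq_zero_of_lt R h, eq_zero_of_lt R (Nat.succ_lt_succ h),
        eq_zero_of_lt R (h.trans (Nat.lt_succ_self ν))]

theorem derivative_zero_add_one (n : ℕ) :
    derivative (bernsteinPolynomial R (n + 1) 0 + bernsteinPolynomial R (n + 1) 1) =
      -(n + 1) * bernsteinPolynomial R n 1 := by
  rw [derivative_add, derivative_zero, derivative_succ_aux]
  push_cast
  ring

theorem derivative_add_succ_succ (n ν : ℕ) :
    derivative (bernsteinPolynomial R (n + 1) (ν + 1) + bernsteinPolynomial R (n + 1) (ν + 2)) =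
      (n + 1) * (bernsteinPolynomial R n ν - bernsteinPolynomial R n (ν + 2)) := by
  rw [derivative_add, derivative_succ_aux, derivative_succ_aux]
  ring

variable {R}

theorem eval_eq (n ν : ℕ) (x : R) :
    (bernsteinPolynomial R n ν).eval x = n.choose ν * x ^ ν * (1 - x) ^ (n - ν) := by
  simp [bernsteinPolynomial]

end CommRing

section Ordered

variable {R : Type*} [CommRing R] [LinearOrder R] [IsStrictOrderedRing R]

theorem eval_nonneg (n ν : ℕ) {θ : R} (h0 : 0 ≤ θ) (h1 : θ ≤ 1) :
    0 ≤ (bernsteinPolynomial R n ν).eval θ := by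
  rw [eval_eq]
  have : 0 ≤ 1 - θ := sub_nonneg.2 h1
  positivity

theorem eval_pos {n ν : ℕ} (h : ν ≤ n) {θ : R} (h0 : 0 < θ) (h1 : θ < 1) :
    0 < (bernsteinPolynomial R n ν).eval θ := by
  rw [eval_eq]
  have : 0 < 1 - θ := sub_pos.2 h1
  have := Nat.choose_pos h
  positivity

end Ordered

theorem eval_div_pos {b n : ℕ} (hb : 0 < b) (hbn : b < n) :
    0 < (bernsteinPolynomial ℝ n b).eval ((b : ℝ) / n) := by
  have hn : (0 : ℝ) < n := by exact_mod_cast hb.trans hbn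
  exact eval_pos hbn.le (by positivity) ((div_lt_one hn).2 (by exact_mod_cast hbn))

theorem eval_div_succ_le {b n : ℕ} (h : b < n) :
    (bernsteinPolynomial ℝ (n + 1) b).eval ((b : ℝ) / (n + 1 : ℕ)) ≤
      (bernsteinPolynomial ℝ n b).eval ((b : ℝ) / n) := by
  obtain ⟨m, rfl⟩ := Nat.exists_eq_add_of_lt h
  have hratio : (bernsteinPolynomial ℝ (b + m + 1 + 1) b).eval ((b : ℝ) / (b + m + 1 + 1)) *
        (1 + ((b + m + 1 : ℕ) : ℝ)⁻¹) ^ (b + m + 1) =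
      (bernsteinPolynomial ℝ (b + m + 1) b).eval ((b : ℝ) / (b + m + 1)) *
        (1 + ((m + 1 : ℕ) : ℝ)⁻¹) ^ (m + 1) := by
    have hchoose :
        ((b + m + 1 + 1).choose b : ℝ) * (m + 2) = (b + m + 1).choose b * (b + m + 2) := by
      have := Nat.choose_mul_succ_eq (b + m + 1) b
      rw [show b + m + 1 + 1 - b = m + 2 by omega] at this
      exact_mod_cast this.symm
    rw [eval_eq, eval_eq, show b + m + 1 + 1 - b = m + 2 by omega,
      show b + m + 1 - b = m + 1 by omega]
    push_cast
    have : (0 : ℝ) < b + m + 1 := by positivity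
    rw [show 1 - (b : ℝ) / (b + m + 1 + 1) = (m + 2) / (b + m + 2) by field_simp; ring,
      show 1 - (b : ℝ) / (b + m + 1) = (m + 1) / (b + m + 1) by field_simp; ring,
      show 1 + ((b : ℝ) + m + 1)⁻¹ = (b + m + 2) / (b + m + 1) by field_simp; ring,
      show 1 + ((m : ℝ) + 1)⁻¹ = (m + 2) / (m + 1) by field_simp; ring]
    simp only [div_pow]
    field_simp
    linear_combination
      ((m + 2 : ℝ) ^ (m + 1) * (b + m + 2) ^ (b + m + 1) * (b + m + 1) ^ (b + m + 1)) * hchoose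
  have hA : 0 < (1 + ((b + m + 1 : ℕ) : ℝ)⁻¹) ^ (b + m + 1) := by positivity
  have hq : 0 ≤ (bernsteinPolynomial ℝ (b + m + 1) b).eval ((b : ℝ) / (b + m + 1)) :=
    eval_nonneg _ _ (by positivity) ((div_le_one (by positivity)).2 (by linarith))
  push_cast
  refine le_of_mul_le_mul_right ?_ hA
  rw [hratio]
  exact mul_le_mul_of_nonneg_left (one_add_inv_pow_monotone (by omega : m + 1 ≤ b + m + 1)) hq

theorem eval_le_eval_add_two {m j : ℕ} (hm : 2 * j + 2 ≤ m) {θ : ℝ}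
    (hθ : (j + 2) / (m + 2) ≤ θ) (hθ1 : θ ≤ 1) :
    (bernsteinPolynomial ℝ m j).eval θ ≤ (bernsteinPolynomial ℝ m (j + 2)).eval θ := by
  obtain ⟨d, rfl⟩ : ∃ d, m = j + 2 + d := ⟨m - (j + 2), by omega⟩
  have hjd : (j : ℝ) ≤ d := by exact_mod_cast (by omega : j ≤ d)
  have h1 : ((j + 2 + d).choose (j + 1) : ℝ) * (j + 1) = (j + 2 + d).choose j * (d + 2) := by
    have := Nat.choose_succ_right_eq (j + 2 + d) j
    rw [show j + 2 + d - j = d + 2 by omega] at this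
    exact_mod_cast this
  have h2 : ((j + 2 + d).choose (j + 2) : ℝ) * (j + 2) = (j + 2 + d).choose (j + 1) * (d + 1) := by
    have := Nat.choose_succ_right_eq (j + 2 + d) (j + 1)
    rw [show j + 2 + d - (j + 1) = d + 1 by omega] at this
    exact_mod_cast this
  have hθ' : (j + 2) * (1 - θ) ≤ (d + 2) * θ := by
    rw [div_le_iff₀ (by positivity)] at hθ
    push_cast at hθ
    linarith
  have h0 : 0 ≤ θ := le_trans (by positivity) hθ
  have hcore :
      ((j + 2 + d).choose j : ℝ) * (1 - θ) ^ 2 ≤ (j + 2 + d).choose (j + 2) * θ ^ 2 := by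
    have hc : (0 : ℝ) ≤ (j + 2 + d).choose j := by positivity
    have hsq : ((j + 2) * (1 - θ)) ^ 2 ≤ ((d + 2) * θ) ^ 2 :=
      pow_le_pow_left₀ (mul_nonneg (by positivity) (by linarith)) hθ' 2
    have hchoose : ((j + 2 + d).choose (j + 2) : ℝ) * (j + 2) * ((j + 1) * (j + 2) * θ ^ 2) =
        (j + 2 + d).choose j * ((d + 1) * (d + 2) * (j + 2) * θ ^ 2) := by
      linear_combination ((j + 1) * (j + 2) * θ ^ 2) * h2 + ((d + 1) * (j + 2) * θ ^ 2) * h1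
    refine le_of_mul_le_mul_left ?_ (by positivity : (0 : ℝ) < (j + 1) * (j + 2) ^ 2)
    nlinarith [mul_le_mul_of_nonneg_left hsq (mul_nonneg hc (by positivity : (0 : ℝ) ≤ j + 1)),
      mul_nonneg (mul_nonneg hc (sq_nonneg θ))
        (mul_nonneg (sub_nonneg.2 hjd) (by positivity : (0 : ℝ) ≤ d + 2))]
  rw [eval_eq, eval_eq, show j + 2 + d - j = d + 2 by omega,
    show j + 2 + d - (j + 2) = d by omega]
  have : 0 ≤ 1 - θ := by linarith
  calc _ = θ ^ j * (1 - θ) ^ d * (((j + 2 + d).choose j : ℝ) * (1 - θ) ^ 2) := by ring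
    _ ≤ θ ^ j * (1 - θ) ^ d * ((j + 2 + d).choose (j + 2) * θ ^ 2) := by gcongr
    _ = _ := by ring

theorem antitoneOn_eval_add_succ {n k : ℕ} (hn : 2 * (k + 1) ≤ n) :
    AntitoneOn (fun θ => (bernsteinPolynomial ℝ n k + bernsteinPolynomial ℝ n (k + 1)).eval θ)
      (Set.Icc ((k + 1) / (n + 1)) 1) := by
  obtain ⟨m, rfl⟩ : ∃ m, n = m + 1 := ⟨n - 1, by omega⟩
  refine antitoneOn_of_deriv_nonpos (convex_Icc _ _) (Polynomial.continuousOn _)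
    (Polynomial.differentiableOn _) fun θ hθ => ?_
  rw [interior_Icc] at hθ
  have h0 : 0 ≤ θ := le_trans (by positivity) hθ.1.le
  rw [Polynomial.deriv]
  cases k with
  | zero =>
    rw [derivative_zero_add_one]
    simp only [eval_mul, eval_neg, eval_add, eval_natCast, eval_one, neg_mul, neg_nonpos]
    exact mul_nonneg (by positivity) (eval_nonneg _ _ h0 hθ.2.le)
  | succ j =>
    rw [derivative_add_succ_succ]
    simp only [eval_mul, eval_sub, eval_add, eval_natCast, eval_one]
    refine mul_nonpos_of_nonneg_of_nonpos (by positivity) (sub_nonpos.2 ?_)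
    refine eval_le_eval_add_two (by omega) (le_trans (le_of_eq ?_) hθ.1.le) hθ.2.le
    push_cast
    ring

end bernsteinPolynomial

section Cdf

variable (R : Type*) [CommRing R]

/-- The polynomial `θ ↦ P(Bin(n, θ) < b)`. -/
noncomputable def cdfPoly (n b : ℕ) : R[X] :=
  ∑ i ∈ range b, bernsteinPolynomial R n i

/-- The polynomial `θ ↦ P(Bin(n, θ) < b) + P(Bin(n, θ) ≤ b)`. -/
noncomputable def medianPoly (n b : ℕ) : R[X] :=
  2 * cdfPoly R n b + bernsteinPolynomial R n b

theorem cdfPoly_succ (n k : ℕ) :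
    cdfPoly R (n + 1) (k + 1) = cdfPoly R n (k + 1) - X * bernsteinPolynomial R n k := by
  induction k with
  | zero =>
    simp only [cdfPoly, zero_add, range_one, sum_singleton, bernsteinPolynomial.succ_zero]
    ring
  | succ k ih =>
    rw [cdfPoly, sum_range_succ, ← cdfPoly, ih, bernsteinPolynomial.succ_succ]
    simp only [cdfPoly, sum_range_succ]
    ring

theorem derivative_cdfPoly_succ (n k : ℕ) :
    derivative (cdfPoly R (n + 1) (k + 1)) = -(n + 1) * bernsteinPolynomial R n k := by
  induction k with
  | zero => simp [cdfPoly, bernsteinPolynomial.derivative_zero]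
  | succ k ih =>
    rw [cdfPoly, sum_range_succ, ← cdfPoly, derivative_add, ih,
      bernsteinPolynomial.derivative_succ_aux]
    ring

theorem medianPoly_succ (n k : ℕ) :
    medianPoly R (n + 1) (k + 1) = medianPoly R n (k + 1) -
      X * (bernsteinPolynomial R n k + bernsteinPolynomial R n (k + 1)) := by
  rw [medianPoly, medianPoly, cdfPoly_succ, bernsteinPolynomial.succ_succ]
  ring

theorem derivative_medianPoly_succ (n k : ℕ) :
    derivative (medianPoly R (n + 1) (k + 1)) =
      -(n + 1) * (bernsteinPolynomial R n k + bernsteinPolynomial R n (k + 1)) := by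
  rw [medianPoly, derivative_add, derivative_mul, derivative_cdfPoly_succ,
    bernsteinPolynomial.derivative_succ_aux]
  simp only [derivative_ofNat]
  ring

end Cdf

theorem medianPoly_eval_half (b : ℕ) : (medianPoly ℝ (2 * b) b).eval (1 / 2) = 1 := by
  set f := fun i => (bernsteinPolynomial ℝ (2 * b) i).eval (1 / 2)
  have hflip : ∀ i ≤ 2 * b, f (2 * b - i) = f i := fun i hi => by
    simp only [f, ← bernsteinPolynomial.flip ℝ _ _ hi, eval_comp, eval_sub, eval_one, eval_X]
    norm_num
  have htail : ∑ i ∈ range b, f (b + (i + 1)) = ∑ i ∈ range b, f i := by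
    rw [← sum_range_reflect f b]
    refine sum_congr rfl fun i hi => ?_
    have := mem_range.1 hi
    rw [← hflip (b - 1 - i) (by omega)]
    congr 1
    omega
  have htotal := congrArg (eval (1 / 2 : ℝ)) (bernsteinPolynomial.sum ℝ (2 * b))
  rw [eval_finsetSum, eval_one, show 2 * b + 1 = b + (b + 1) by ring, sum_range_add,
    sum_range_succ', htail] at htotal
  simp only [medianPoly, cdfPoly, eval_add, eval_mul, eval_finsetSum]
  norm_num [f] at htotal ⊢
  linarith

theorem medianPoly_eval_le_succ {b n : ℕ} (hb : 0 < b) (hn : 2 * b ≤ n) :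
    (medianPoly ℝ n b).eval ((b : ℝ) / n) ≤
      (medianPoly ℝ (n + 1) b).eval ((b : ℝ) / (n + 1 : ℕ)) := by
  obtain ⟨k, rfl⟩ : ∃ k, b = k + 1 := ⟨b - 1, by omega⟩
  push_cast
  set p : ℝ := (k + 1) / n
  set p' : ℝ := (k + 1) / (n + 1)
  obtain ⟨g, hg⟩ : ∃ g, g = bernsteinPolynomial ℝ n k + bernsteinPolynomial ℝ n (k + 1) :=
    ⟨_, rfl⟩
  have hn0 : (0 : ℝ) < n := by exact_mod_cast (by omega : 0 < n)
  have hp'p : p' ≤ p := div_le_div_of_nonneg_left (by positivity) hn0 (by linarith)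
  have hp1 : p ≤ 1 := (div_le_one hn0).2 (by exact_mod_cast (by omega : k + 1 ≤ n))
  have hgp : ∀ θ ∈ Set.Icc p' p, g.eval p ≤ g.eval θ := fun θ hθ => hg ▸
    bernsteinPolynomial.antitoneOn_eval_add_succ hn ⟨hθ.1, hθ.2.trans hp1⟩ ⟨hp'p, hp1⟩ hθ.2
  have hmvt := (convex_Icc p' p).image_sub_le_mul_sub_of_deriv_le
    (f := fun θ => (medianPoly ℝ (n + 1) (k + 1)).eval θ) (Polynomial.continuousOn _)
    (Polynomial.differentiableOn _) (C := -(n + 1) * g.eval p) (fun θ hθ => by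
      rw [interior_Icc] at hθ
      rw [Polynomial.deriv, derivative_medianPoly_succ, ← hg, eval_mul]
      simp only [eval_neg, eval_add (p := (n : ℝ[X])), eval_natCast, eval_one, neg_mul,
        neg_le_neg_iff]
      exact mul_le_mul_of_nonneg_left (hgp θ ⟨hθ.1.le, hθ.2.le⟩) (by positivity))
    p' (Set.left_mem_Icc.2 hp'p) p (Set.right_mem_Icc.2 hp'p) hp'p
  have hstep : (n + 1) * (p - p') = p := by
    simp only [p, p']
    field_simp
    ring
  have hsplit : (medianPoly ℝ (n + 1) (k + 1)).eval p =
      (medianPoly ℝ n (k + 1)).eval p - p * g.eval p := by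
    rw [medianPoly_succ, ← hg, eval_sub, eval_mul, eval_X]
  linear_combination hmvt - g.eval p * hstep - hsplit

theorem one_le_medianPoly_eval {b n : ℕ} (hb : 0 < b) (hn : 2 * b ≤ n) :
    1 ≤ (medianPoly ℝ n b).eval ((b : ℝ) / n) := by
  induction n, hn using Nat.le_induction with
  | base =>
    have : (b : ℝ) ≠ 0 := by positivity
    rw [show (b : ℝ) / (2 * b : ℕ) = 1 / 2 by push_cast; field_simp, medianPoly_eval_half]
  | succ n hn ih => exact ih.trans (medianPoly_eval_le_succ hb hn)

theorem binP_eq (b n : ℕ) : binP b n = (cdfPoly ℝ n b).eval ((b : ℝ) / n) := by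
  simp [binP, cdfPoly, eval_finsetSum, bernsteinPolynomial.eval_eq]

theorem binZ_eq {b n : ℕ} (hq : (bernsteinPolynomial ℝ n b).eval ((b : ℝ) / n) ≠ 0) :
    binZ b n = 1 / 2 - ((medianPoly ℝ n b).eval ((b : ℝ) / n) - 1) /
      (2 * (bernsteinPolynomial ℝ n b).eval ((b : ℝ) / n)) := by
  rw [binZ, binP_eq, ← bernsteinPolynomial.eval_eq, medianPoly, eval_add, eval_mul]
  field_simp
  norm_num
  ring

theorem z_antitone_in_n (b n : ℕ) (hb : 0 < b) (hn : 2 * b ≤ n) :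
    binZ b (n + 1) ≤ binZ b n := by
  have hq := bernsteinPolynomial.eval_div_pos hb (by omega : b < n)
  have hq' := bernsteinPolynomial.eval_div_pos hb (by omega : b < n + 1)
  have hQ := bernsteinPolynomial.eval_div_succ_le (by omega : b < n)
  have hW := one_le_medianPoly_eval hb hn
  have hW' := medianPoly_eval_le_succ hb hn
  rw [binZ_eq hq'.ne', binZ_eq hq.ne']
  gcongr 1 / 2 - ?_
  exact div_le_div₀ (by linarith) (by linarith) (by positivity) (by linarith)
end

section
/- For all positive integers b and n with b + 1 ≤ n ≤ 3b + 1, one has p_{b+1,n} < p_{b,n}. -/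
open Finset

/-!
Let `φ(x) = P(Bin(n, x) ≤ b)`, `p = b/n`, `q = (b+1)/n`, `k = n - b - 1` and `f(t) = t^b (1-t)^k`.
Then `p_{b+1,n} = φ(q)`, `p_{b,n} = φ(p) - P(Bin(n, p) = b)` and `φ' = -(n-b) C(n,b) f`, while
`P(Bin(n, p) = b) = (n-b) C(n,b) (q-p) f(p)`; so the claim is `(q-p) f(p) < ∫_p^q f`.
Since `exp x ≥ 1 + x`, `∫_p^q f ≥ f(p) (q - p + ∫_p^q log (f / f(p)))`, and the last integral is
`(b(b+1) log(1 + 1/b) - b + k² log(1 + 1/k) - k) / n`. This is positive for `1 ≤ k ≤ 2b`, as the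
first two terms of the series `log (1 + 1/x) = ∑ 2 / ((2j+1) (2x+1)^(2j+1))` already show.
The case `n = b + 1` is separate: there `p_{b+1,n} = 0`.
-/

open Real Set intervalIntegral

lemma two_div_add_le_log_one_add_inv {x : ℝ} (hx : 0 < x) :
    2 / (2 * x + 1) + 2 / (3 * (2 * x + 1) ^ 3) ≤ log (1 + x⁻¹) := by
  refine le_of_eq_of_le ?_
    (sum_le_hasSum (range 2) (fun _ _ => by positivity) (hasSum_log_one_add_inv hx))
  norm_num [sum_range_succ, div_pow]
  field_simp

lemma log_one_add_inv_gap_pos {b k : ℝ} (hb : 1 ≤ b) (hk : 1 ≤ k) (hkb : k ≤ 2 * b) :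
    0 < b * (b + 1) * log (1 + b⁻¹) - b + (k ^ 2 * log (1 + k⁻¹) - k) := by
  have hB := mul_le_mul_of_nonneg_left (two_div_add_le_log_one_add_inv (by linarith : 0 < b))
    (by positivity : 0 ≤ b * (b + 1))
  have hK := mul_le_mul_of_nonneg_left (two_div_add_le_log_one_add_inv (by linarith : 0 < k))
    (sq_nonneg k)
  suffices 0 < b * (b + 1) * (2 / (2 * b + 1) + 2 / (3 * (2 * b + 1) ^ 3)) - b
      + (k ^ 2 * (2 / (2 * k + 1) + 2 / (3 * (2 * k + 1) ^ 3)) - k) by linarith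
  obtain ⟨A, hA, rfl⟩ : ∃ A, 3 ≤ A ∧ b = (A - 1) / 2 := ⟨2 * b + 1, by linarith, by ring⟩
  obtain ⟨C, hC, rfl⟩ : ∃ C, 3 ≤ C ∧ k = (C - 1) / 2 := ⟨2 * k + 1, by linarith, by ring⟩
  have hCA : C ≤ 2 * A - 1 := by linarith
  have hA0 : 0 < A := by linarith
  have hC0 : 0 < C := by linarith
  -- the numerator of the lower bound over the common denominator `6 A³ C³`
  have hpoly : 0 < 4 * A ^ 3 * C ^ 2 - 2 * A ^ 2 * C ^ 3 - 2 * A ^ 3 * C + A ^ 3 - C ^ 3 := by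
    nlinarith [mul_nonneg (mul_nonneg (sub_nonneg.2 hC) (sub_nonneg.2 hCA)) (sq_nonneg A),
      mul_pos hA0 hC0, mul_pos (mul_pos hA0 hA0) hC0, sq_nonneg (C - 3), sq_nonneg (2 * A - 1 - C)]
  rw [show 2 * ((A - 1) / 2) + 1 = A by ring, show 2 * ((C - 1) / 2) + 1 = C by ring]
  field_simp
  linarith

lemma mul_sub_add_integral_log_div_le_integral {f : ℝ → ℝ} {a b c : ℝ} (hab : a ≤ b)
    (hc : 0 < c) (hf : ContinuousOn f (Icc a b)) (hf_pos : ∀ t ∈ Icc a b, 0 < f t) :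
    c * (b - a + ∫ t in a..b, log (f t / c)) ≤ ∫ t in a..b, f t := by
  have hlog : IntervalIntegrable (fun t => log (f t / c)) MeasureTheory.volume a b :=
    ((hf.div_const c).log fun t ht => (div_pos (hf_pos t ht) hc).ne').intervalIntegrable_of_Icc hab
  calc c * (b - a + ∫ t in a..b, log (f t / c))
      = ∫ t in a..b, c * (1 + log (f t / c)) := by
        rw [integral_const_mul, integral_add intervalIntegrable_const hlog, integral_one]
    _ ≤ ∫ t in a..b, f t := by
      refine integral_mono_on hab ((intervalIntegrable_const.add hlog).const_mul c)
        (hf.intervalIntegrable_of_Icc hab) fun t ht => ?_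
      calc c * (1 + log (f t / c)) ≤ c * (f t / c) := by
            gcongr
            linarith [log_le_sub_one_of_pos (div_pos (hf_pos t ht) hc)]
        _ = f t := mul_div_cancel₀ _ hc.ne'

lemma integral_log_sub_log_left_endpoint {a N : ℝ} (ha : 0 < a) (hN : 0 < N) :
    ∫ s in a / N..(a + 1) / N, (log s - log (a / N)) = ((a + 1) * log (1 + a⁻¹) - 1) / N := by
  rw [integral_sub intervalIntegrable_log' intervalIntegrable_const, integral_log, integral_const,
    smul_eq_mul, log_div (by positivity) hN.ne', log_div ha.ne' hN.ne',
    show 1 + a⁻¹ = (a + 1) / a by field_simp, log_div (by positivity) ha.ne']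
  field_simp
  ring

lemma integral_log_sub_log_right_endpoint {a N : ℝ} (ha : 0 < a) (hN : 0 < N) :
    ∫ s in a / N..(a + 1) / N, (log s - log ((a + 1) / N)) = (a * log (1 + a⁻¹) - 1) / N := by
  rw [integral_sub intervalIntegrable_log' intervalIntegrable_const, integral_log, integral_const,
    smul_eq_mul, log_div (by positivity) hN.ne', log_div ha.ne' hN.ne',
    show 1 + a⁻¹ = (a + 1) / a by field_simp, log_div (by positivity) ha.ne']
  field_simp
  ring

lemma pos_and_one_sub_pos_of_mem_Icc {b k N t : ℝ} (hb : 0 < b) (hk : 0 < k)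
    (hN : N = b + 1 + k) (ht : t ∈ Icc (b / N) ((b + 1) / N)) : 0 < t ∧ 0 < 1 - t := by
  have hN0 : 0 < N := by linarith
  refine ⟨(div_pos hb hN0).trans_le ht.1, ?_⟩
  have : (b + 1) / N < 1 := by rw [div_lt_one hN0]; linarith
  linarith [ht.2]

lemma integral_log_pow_mul_one_sub_pow_div {b k : ℕ} {N : ℝ} (hb : 0 < b) (hk : 0 < k)
    (hN : N = b + 1 + k) :
    ∫ t in b / N..(b + 1) / N, log (t ^ b * (1 - t) ^ k / ((b / N) ^ b * (1 - b / N) ^ k))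
      = (b * (b + 1) * log (1 + (b : ℝ)⁻¹) - b + (k ^ 2 * log (1 + (k : ℝ)⁻¹) - k)) / N := by
  have hb' : (0 : ℝ) < b := by exact_mod_cast hb
  have hk' : (0 : ℝ) < k := by exact_mod_cast hk
  have hN0 : 0 < N := by rw [hN]; positivity
  have hle : (b : ℝ) / N ≤ (b + 1) / N := by gcongr; linarith
  have hlog_eq : EqOn (fun t => log (t ^ b * (1 - t) ^ k / ((b / N) ^ b * (1 - b / N) ^ k)))
      (fun t => b * (log t - log (b / N)) + k * (log (1 - t) - log (1 - b / N)))
      (uIcc (b / N) ((b + 1) / N)) := fun t ht => by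
    rw [uIcc_of_le hle] at ht
    obtain ⟨ht0, ht1⟩ := pos_and_one_sub_pos_of_mem_Icc hb' hk' hN ht
    obtain ⟨hp0, hp1⟩ := pos_and_one_sub_pos_of_mem_Icc hb' hk' hN ⟨le_rfl, hle⟩
    beta_reduce
    rw [log_div (by positivity) (by positivity), log_mul (by positivity) (by positivity),
      log_mul (by positivity) (by positivity), log_pow, log_pow, log_pow, log_pow]
    ring
  have h1p : 1 - b / N = (k + 1) / N := by field_simp; linarith
  have h1q : 1 - (b + 1) / N = k / N := by field_simp; linarith
  have hint_left : IntervalIntegrable (fun t => log t - log (b / N)) MeasureTheory.volume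
      (b / N) ((b + 1) / N) := intervalIntegrable_log'.sub intervalIntegrable_const
  have hint_right : IntervalIntegrable (fun t => log (1 - t) - log (1 - b / N))
      MeasureTheory.volume (b / N) ((b + 1) / N) := by
    simpa using (intervalIntegrable_log'.sub intervalIntegrable_const).comp_sub_left 1
      (a := 1 - b / N) (b := 1 - (b + 1) / N)
  rw [integral_congr hlog_eq, integral_add (hint_left.const_mul _) (hint_right.const_mul _),
    integral_const_mul, integral_const_mul, integral_log_sub_log_left_endpoint hb' hN0,
    integral_comp_sub_left (fun s => log s - log (1 - b / N)) 1, h1p, h1q,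
    integral_log_sub_log_right_endpoint hk' hN0]
  ring

lemma pow_mul_one_sub_pow_div_lt_integral {b k : ℕ} {N : ℝ} (hb : 0 < b) (hk : 0 < k)
    (hkb : k ≤ 2 * b) (hN : N = b + 1 + k) :
    (b / N) ^ b * (1 - b / N) ^ k / N < ∫ t in b / N..(b + 1) / N, t ^ b * (1 - t) ^ k := by
  have hb' : (0 : ℝ) < b := by exact_mod_cast hb
  have hk' : (0 : ℝ) < k := by exact_mod_cast hk
  have hN0 : 0 < N := by rw [hN]; positivity
  have hle : (b : ℝ) / N ≤ (b + 1) / N := by gcongr; linarith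
  have hf_pos : ∀ t ∈ Icc ((b : ℝ) / N) ((b + 1) / N), 0 < t ^ b * (1 - t) ^ k := fun t ht => by
    obtain ⟨_, _⟩ := pos_and_one_sub_pos_of_mem_Icc hb' hk' hN ht
    positivity
  have hgap : 0 < ∫ t in b / N..(b + 1) / N,
      log (t ^ b * (1 - t) ^ k / ((b / N) ^ b * (1 - b / N) ^ k)) := by
    rw [integral_log_pow_mul_one_sub_pow_div hb hk hN]
    exact div_pos (log_one_add_inv_gap_pos (by exact_mod_cast hb) (by exact_mod_cast hk)
      (by exact_mod_cast hkb)) hN0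
  calc (b / N) ^ b * (1 - b / N) ^ k / N
        = (b / N) ^ b * (1 - b / N) ^ k * ((b + 1) / N - b / N) := by ring
    _ < _ := mul_lt_mul_of_pos_left (lt_add_of_pos_right _ hgap) (hf_pos _ ⟨le_rfl, hle⟩)
    _ ≤ _ := mul_sub_add_integral_log_div_le_integral hle (hf_pos _ ⟨le_rfl, hle⟩)
        (by fun_prop) hf_pos

noncomputable def binomCdf (n b : ℕ) (x : ℝ) : ℝ :=
  ∑ i ∈ range (b + 1), (n.choose i : ℝ) * x ^ i * (1 - x) ^ (n - i)

lemma hasDerivAt_binomCdf (n b : ℕ) (x : ℝ) :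
    HasDerivAt (binomCdf n b)
      (-((n - b : ℕ) * n.choose b * (x ^ b * (1 - x) ^ (n - b - 1)))) x := by
  let g (j : ℕ) : ℝ := j * n.choose j * (x ^ (j - 1) * (1 - x) ^ (n - j))
  have hg_succ (i : ℕ) :
      g (i + 1) = (n - i : ℕ) * n.choose i * (x ^ i * (1 - x) ^ (n - i - 1)) := by
    have h : ((i + 1 : ℕ) : ℝ) * n.choose (i + 1) = (n - i : ℕ) * n.choose i := by
      exact_mod_cast (mul_comm _ _).trans ((Nat.choose_succ_right_eq n i).trans (mul_comm _ _))
    rw [← h, Nat.sub_sub]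
    rfl
  have hterm (i : ℕ) : HasDerivAt (fun x : ℝ => (n.choose i : ℝ) * x ^ i * (1 - x) ^ (n - i))
      (g i - g (i + 1)) x := by
    rw [hg_succ]
    refine (((hasDerivAt_pow i x).const_mul (n.choose i : ℝ)).fun_mul
      (((hasDerivAt_id' x).const_sub 1).fun_pow (n - i))).congr_deriv ?_
    simp only [g]
    ring
  have hsum := HasDerivAt.fun_sum fun i (_ : i ∈ range (b + 1)) => hterm i
  rw [sum_range_sub', hg_succ] at hsum
  simp only [g, CharP.cast_eq_zero, zero_mul, zero_sub] at hsum
  exact hsum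

lemma binomCdf_sub_binomCdf (n b : ℕ) (x y : ℝ) :
    binomCdf n b x - binomCdf n b y
      = (n - b : ℕ) * n.choose b * ∫ t in x..y, t ^ b * (1 - t) ^ (n - b - 1) := by
  have hftc := integral_eq_sub_of_hasDerivAt (fun t _ => hasDerivAt_binomCdf n b t)
    ((by fun_prop : Continuous _).intervalIntegrable x y)
  rw [integral_neg, integral_const_mul] at hftc
  linarith

lemma binP_eq_binomCdf_sub (b n : ℕ) :
    binP b n = binomCdf n b (b / n) - n.choose b * (b / n) ^ b * (1 - b / n) ^ (n - b) := by
  rw [binomCdf, sum_range_succ, binP, add_sub_cancel_right]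

lemma binP_succ_eq_binomCdf (b n : ℕ) : binP (b + 1) n = binomCdf n b ((b + 1) / n) := by
  rw [binP, binomCdf]
  push_cast
  rfl

lemma binP_self (n : ℕ) : binP n n = 0 := by
  refine sum_eq_zero fun i hi => ?_
  have hn : (n : ℝ) ≠ 0 := Nat.cast_ne_zero.2 (by have := mem_range.1 hi; omega)
  rw [div_self hn, sub_self, zero_pow (by have := mem_range.1 hi; omega), mul_zero]

lemma binP_pos {b n : ℕ} (hb : 0 < b) (hbn : b < n) : 0 < binP b n := by
  have hn : (0 : ℝ) < n := by exact_mod_cast hb.trans hbn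
  have hp : (0 : ℝ) < 1 - b / n := by
    rw [sub_pos, div_lt_one hn]
    exact_mod_cast hbn
  refine sum_pos (fun i hi => ?_) ⟨0, mem_range.2 hb⟩
  have : 0 < n.choose i := Nat.choose_pos (by have := mem_range.1 hi; omega)
  positivity

theorem p_decreasing_in_b (b n : ℕ) (hb : 0 < b) (hn1 : b + 1 ≤ n) (hn2 : n ≤ 3 * b + 1) :
    binP (b + 1) n < binP b n := by
  rcases hn1.eq_or_lt with rfl | hbn
  · rw [binP_self]
    exact binP_pos hb (lt_add_one b)
  set k := n - b - 1
  have hnk : n - b = k + 1 := by omega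
  have hN : (n : ℝ) = b + 1 + k := by exact_mod_cast (by omega : n = b + 1 + k)
  have hkey := pow_mul_one_sub_pow_div_lt_integral hb (by omega) (by omega) hN
  have hmass : (n.choose b : ℝ) * (b / n) ^ b * (1 - b / n) ^ (n - b)
      = (n - b : ℕ) * n.choose b * ((b / n) ^ b * (1 - b / n) ^ k / n) := by
    have hn0 : (n : ℝ) ≠ 0 := by rw [hN]; positivity
    have h1p : 1 - (b : ℝ) / n = (k + 1) / n := by field_simp; linarith
    rw [hnk, pow_succ, h1p]
    push_cast
    ring
  have hc : (0 : ℝ) < (n - b : ℕ) * n.choose b :=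
    mul_pos (by rw [hnk]; positivity) (by exact_mod_cast Nat.choose_pos (by omega))
  rw [binP_succ_eq_binomCdf, binP_eq_binomCdf_sub, hmass]
  linarith [binomCdf_sub_binomCdf n b (b / n) ((b + 1) / n), mul_lt_mul_of_pos_left hkey hc]
end

section
/- For all positive integers b and n with b + 1 ≤ n, one has p_{b+1,n} − p_{b,n} = [((b+1)/n)^b (1−(b+1)/n)^{n−b} − b·∫_{1−(b+1)/n}^{1−b/n} (1−z)^{b−1} z^{n−b} dz] / [b·∫_0^1 (1−z)^{b−1} z^{n−b} dz]. -/
open Finset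

/-!
`F(x) = binomialCDF n b x = P(Bin(n, x) < b)` has derivative `-b C(n,b) x^(b-1) (1-x)^(n-b)`:
differentiating the sum term by term, `(n-i) C(n,i) = (i+1) C(n,i+1)` makes it telescope. Hence
differences of `F` are incomplete Beta integrals, and `F(0) - F(1) = 1` evaluates the complete one
as `1 / (b C(n,b))`. Then `p_{b+1,n} - p_{b,n} = F(x) - F(b/n) + C(n,b) x^b (1-x)^(n-b)` at
`x = (b+1)/n`, and the substitution `z = 1 - t` puts the integrals in the form of the statement.
-/

noncomputable def binomialCDF (n b : ℕ) (x : ℝ) : ℝ :=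
  ∑ i ∈ range b, (n.choose i : ℝ) * x ^ i * (1 - x) ^ (n - i)

namespace binomialCDF

variable {n b : ℕ}

lemma hasDerivAt_term (n i : ℕ) (x : ℝ) :
    HasDerivAt (fun y : ℝ => (n.choose i : ℝ) * y ^ i * (1 - y) ^ (n - i))
      ((i : ℝ) * n.choose i * (x ^ (i - 1) * (1 - x) ^ (n - i)) -
        ((i + 1 : ℕ) : ℝ) * n.choose (i + 1) *
          (x ^ (i + 1 - 1) * (1 - x) ^ (n - (i + 1)))) x := by
  have hpow := (hasDerivAt_pow i x).const_mul (n.choose i : ℝ)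
  have hcompl : HasDerivAt (fun y : ℝ => (1 - y) ^ (n - i))
      ((n - i : ℕ) * (1 - x) ^ (n - i - 1) * (-1)) x :=
    ((hasDerivAt_id x).const_sub 1).pow (n - i)
  refine (hpow.mul hcompl).congr_deriv ?_
  have hchoose : (n.choose (i + 1) : ℝ) * (i + 1) = n.choose i * ((n - i : ℕ) : ℝ) := by
    exact_mod_cast n.choose_succ_right_eq i
  rw [show n - (i + 1) = n - i - 1 by omega]
  push_cast
  linear_combination x ^ i * (1 - x) ^ (n - i - 1) * hchoose

lemma hasDerivAt (n b : ℕ) (x : ℝ) :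
    HasDerivAt (binomialCDF n b)
      (-((b : ℝ) * n.choose b * (x ^ (b - 1) * (1 - x) ^ (n - b)))) x := by
  refine (HasDerivAt.fun_sum fun i (_ : i ∈ range b) => hasDerivAt_term n i x).congr_deriv ?_
  rw [sum_range_sub' (fun j => (j : ℝ) * n.choose j * (x ^ (j - 1) * (1 - x) ^ (n - j)))]
  simp

lemma sub_eq_integral (n b : ℕ) (p q : ℝ) :
    binomialCDF n b q - binomialCDF n b p =
      -((b : ℝ) * n.choose b) * ∫ t in p..q, t ^ (b - 1) * (1 - t) ^ (n - b) := by
  rw [← intervalIntegral.integral_const_mul,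
    ← intervalIntegral.integral_eq_sub_of_hasDerivAt (fun t _ => hasDerivAt n b t)
      (by apply Continuous.intervalIntegrable; fun_prop)]
  exact intervalIntegral.integral_congr fun t _ => by ring

lemma apply_zero (hb : 0 < b) : binomialCDF n b 0 = 1 := by
  rw [binomialCDF, sum_eq_single_of_mem 0 (mem_range.mpr hb)]
  · simp
  · intro i _ hi
    simp [zero_pow hi]

lemma apply_one (hbn : b ≤ n) : binomialCDF n b 1 = 0 :=
  sum_eq_zero fun i hi => by
    have : n - i ≠ 0 := by have := mem_range.mp hi; omega
    simp [zero_pow this]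

lemma succ (n b : ℕ) (x : ℝ) :
    binomialCDF n (b + 1) x = binomialCDF n b x + n.choose b * x ^ b * (1 - x) ^ (n - b) :=
  sum_range_succ _ _

end binomialCDF

lemma integral_pow_mul_one_sub_pow {n b : ℕ} (hb : 0 < b) (hbn : b ≤ n) :
    ∫ t in (0 : ℝ)..1, t ^ (b - 1) * (1 - t) ^ (n - b) = ((b : ℝ) * n.choose b)⁻¹ := by
  have h := binomialCDF.sub_eq_integral n b 0 1
  rw [binomialCDF.apply_zero hb, binomialCDF.apply_one hbn] at h
  exact eq_inv_of_mul_eq_one_right (by linarith)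

lemma integral_comp_one_sub_pow_mul_pow (k m : ℕ) (p q : ℝ) :
    ∫ z in (1 - q)..(1 - p), (1 - z) ^ k * z ^ m = ∫ t in p..q, t ^ k * (1 - t) ^ m := by
  simpa only [sub_sub_cancel] using (intervalIntegral.integral_comp_sub_left
    (a := p) (b := q) (fun z => (1 - z) ^ k * z ^ m) 1).symm

theorem p_difference_integral_expression (b n : ℕ) (hb : 0 < b) (hbn : b + 1 ≤ n) :
    binP (b + 1) n - binP b n =
      ((((b : ℝ) + 1) / n) ^ b * (1 - ((b : ℝ) + 1) / n) ^ (n - b) -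
          (b : ℝ) * ∫ z in (1 - ((b : ℝ) + 1) / n)..(1 - (b : ℝ) / n),
            (1 - z) ^ (b - 1) * z ^ (n - b)) /
        ((b : ℝ) * ∫ z in (0 : ℝ)..1, (1 - z) ^ (b - 1) * z ^ (n - b)) := by
  have hdiff : binP (b + 1) n - binP b n =
      binomialCDF n b ((b + 1) / n) - binomialCDF n b (b / n) +
        n.choose b * ((b + 1) / n) ^ b * (1 - (b + 1) / n) ^ (n - b) := by
    rw [binP, binP, ← binomialCDF, ← binomialCDF, binomialCDF.succ]
    push_cast
    ring
  have hfull := integral_comp_one_sub_pow_mul_pow (b - 1) (n - b) 0 1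
  rw [sub_zero, sub_self] at hfull
  rw [hdiff, binomialCDF.sub_eq_integral, integral_comp_one_sub_pow_mul_pow, hfull,
    integral_pow_mul_one_sub_pow hb (by omega)]
  field_simp
  ring
end

section
/- For all positive integers b and n with b ≤ n, one has z_{b,n} = (1/2)·b·(∫_{1−b/n}^1 (1−z)^{b−1} z^{n−b} dz − ∫_0^{1−b/n} (1−z)^{b−1} z^{n−b} dz) / ((b/n)^b (1−b/n)^{n−b}). -/
open Finset

/-!
The lower tail `P(Bin(n, 1 - z) < b)`, as a function of `z`, has derivative `b C(n,b) (1-z)^(b-1) z^(n-b)`: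
differentiating term by term, the identity `(n - i) C(n,i) = (i + 1) C(n,i+1)` makes the sum
telescope. Integrating this derivative from `1 - b/n` to `1` gives `1 - p_{b,n}` and from `0`
to `1 - b/n` gives `p_{b,n}`, so the difference of the two integrals is `b C(n,b)` times
`1 - 2 p_{b,n}`.
-/

noncomputable def binomLowerTail (n b : ℕ) (z : ℝ) : ℝ :=
  ∑ i ∈ range b, (n.choose i : ℝ) * (1 - z) ^ i * z ^ (n - i)

lemma hasDerivAt_choose_mul_pow_mul_pow (n i : ℕ) (z : ℝ) :
    HasDerivAt (fun z : ℝ => (n.choose i : ℝ) * (1 - z) ^ i * z ^ (n - i))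
      (((i + 1 : ℕ) : ℝ) * n.choose (i + 1) * (1 - z) ^ (i + 1 - 1) * z ^ (n - (i + 1)) -
        (i : ℝ) * n.choose i * (1 - z) ^ (i - 1) * z ^ (n - i)) z := by
  have hderiv := ((((hasDerivAt_id z).const_sub 1).pow i).const_mul (n.choose i : ℝ)).fun_mul
    (hasDerivAt_pow (n - i) z)
  have hchoose : ((n.choose (i + 1) * (i + 1) : ℕ) : ℝ) = (n.choose i * (n - i) : ℕ) :=
    congrArg _ (Nat.choose_succ_right_eq n i)
  have hexp : n - (i + 1) = n - i - 1 := by omega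
  simp only [Pi.pow_apply, id] at hderiv
  refine hderiv.congr_deriv ?_
  rw [Nat.add_sub_cancel, hexp]
  push_cast at hchoose ⊢
  linear_combination -(1 - z) ^ i * z ^ (n - i - 1) * hchoose

lemma hasDerivAt_binomLowerTail (n b : ℕ) (z : ℝ) :
    HasDerivAt (binomLowerTail n b)
      ((b : ℝ) * n.choose b * ((1 - z) ^ (b - 1) * z ^ (n - b))) z := by
  have hsum := HasDerivAt.fun_sum fun i (_ : i ∈ range b) =>
    hasDerivAt_choose_mul_pow_mul_pow n i z
  rw [sum_range_sub (fun i => (i : ℝ) * n.choose i * (1 - z) ^ (i - 1) * z ^ (n - i))] at hsum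
  refine hsum.congr_deriv ?_
  simp only [Nat.cast_zero, zero_mul, sub_zero]
  ring

lemma mul_integral_eq_binomLowerTail_sub (n b : ℕ) (a c : ℝ) :
    (b : ℝ) * n.choose b * ∫ z in a..c, (1 - z) ^ (b - 1) * z ^ (n - b) =
      binomLowerTail n b c - binomLowerTail n b a := by
  rw [← intervalIntegral.integral_const_mul]
  exact intervalIntegral.integral_eq_sub_of_hasDerivAt
    (fun z _ => hasDerivAt_binomLowerTail n b z) ((Continuous.intervalIntegrable (by fun_prop)) _ _)

lemma binomLowerTail_one (n : ℕ) {b : ℕ} (hb : 0 < b) : binomLowerTail n b 1 = 1 := by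
  rw [binomLowerTail, sum_eq_single_of_mem 0 (mem_range.mpr hb)]
  · simp
  · intro i _ hi
    simp [zero_pow hi]

lemma binomLowerTail_zero {n b : ℕ} (hbn : b ≤ n) : binomLowerTail n b 0 = 0 := by
  refine sum_eq_zero fun i hi => ?_
  have : n - i ≠ 0 := by
    have := mem_range.mp hi
    omega
  simp [zero_pow this]

lemma binP_eq_binomLowerTail (b n : ℕ) : binP b n = binomLowerTail n b (1 - b / n) := by
  simp only [binP, binomLowerTail, sub_sub_cancel]

theorem z_integral_expression (b n : ℕ) (hb : 0 < b) (hbn : b ≤ n) :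
    binZ b n =
      (1 / 2) * (b : ℝ) *
        ((∫ z in (1 - (b : ℝ) / n)..1, (1 - z) ^ (b - 1) * z ^ (n - b)) -
          ∫ z in (0 : ℝ)..(1 - (b : ℝ) / n), (1 - z) ^ (b - 1) * z ^ (n - b)) /
        (((b : ℝ) / n) ^ b * (1 - (b : ℝ) / n) ^ (n - b)) := by
  have hchoose : (n.choose b : ℝ) ≠ 0 := by exact_mod_cast (Nat.choose_pos hbn).ne'
  have hupper := mul_integral_eq_binomLowerTail_sub n b (1 - b / n) 1
  have hlower := mul_integral_eq_binomLowerTail_sub n b 0 (1 - b / n)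
  rw [binomLowerTail_one n hb, ← binP_eq_binomLowerTail] at hupper
  rw [binomLowerTail_zero hbn, ← binP_eq_binomLowerTail] at hlower
  rw [binZ, mul_assoc, ← div_div]
  congr 1
  rw [div_eq_iff hchoose]
  linear_combination (-1 / 2 : ℝ) * hupper + (1 / 2 : ℝ) * hlower
end
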